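/- Per_s(F) ≤ P_S(F) + C(|F|^2 + Π_S(F)), where Π_S(F) := ∫_{F̃} ∫_{F̂} |x-y|^{-(n+s)} dx dy, F̃ := F ∩ {x_1 ∈ [1/4, 1/2]}, F̂ := (F + e_1) ∩ {x_1 ∈ [1/2, 3/4]}, for a constant C depending only on n, s. -/

import Mathlib

open MeasureTheory Set
open scoped ENNReal Classical

noncomputable section

abbrev V (d : ℕ) := ℝ × EuclideanSpace ℝ (Fin d)

/-- Euclidean norm on `ℝ × ℝ^{d}`. -/
def eNorm {d : ℕ} (x : V d) : ℝ := Real.sqrt (x.1 ^ 2 + ‖x.2‖ ^ 2)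

/-- The kernel `|x|^{-(n+s)}` (with value `∞` at the origin). -/
def ker (n : ℕ) (s : ℝ) {d : ℕ} (x : V d) : ℝ≥0∞ :=
  (ENNReal.ofReal (eNorm x)) ^ (-((n : ℝ) + s))

/-- The periodic kernel `K(x) = ∑_{k ∈ ℤ} |x + k e₁|^{-(n+s)}`. -/
def Kper (n : ℕ) (s : ℝ) {d : ℕ} (x : V d) : ℝ≥0∞ :=
  ∑' k : ℤ, ker n s (x.1 + (k : ℝ), x.2)

/-- The slab `S = [-1/2,1/2] × ℝ^{n-1}`. -/
def slab (d : ℕ) : Set (V d) := {x | x.1 ∈ Icc (-(1:ℝ)/2) (1/2)}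

/-- The periodic nonlocal perimeter `P_S`. -/
def PS (n : ℕ) (s : ℝ) {d : ℕ} (F : Set (V d)) : ℝ≥0∞ :=
  ∫⁻ x in F ∩ slab d, ∫⁻ y in slab d \ F, Kper n s (x - y)

/-- The fractional perimeter `Per_s`. -/
def Pers (n : ℕ) (s : ℝ) {d : ℕ} (F : Set (V d)) : ℝ≥0∞ :=
  ∫⁻ x in F, ∫⁻ y in Fᶜ, ker n s (x - y)

/-- Horizontal translation `E + τ e₁`. -/
def htrans {d : ℕ} (τ : ℝ) (E : Set (V d)) : Set (V d) :=
  (fun p : V d => (p.1 + τ, p.2)) '' E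

/-- Periodic extension `F_per = ⋃_{k ∈ ℤ} (F + k e₁)`. -/
def perext {d : ℕ} (F : Set (V d)) : Set (V d) := ⋃ k : ℤ, htrans (k : ℝ) F

/-- The boundary cross term `Π_S(F)`. -/
def PiS (n : ℕ) (s : ℝ) {d : ℕ} (F : Set (V d)) : ℝ≥0∞ :=
  ∫⁻ x in F ∩ {x : V d | x.1 ∈ Icc (1/4 : ℝ) (1/2)},
    ∫⁻ y in htrans (1:ℝ) F ∩ {y : V d | y.1 ∈ Icc (1/2 : ℝ) (3/4)}, ker n s (x - y)

/-- The class `𝒦` of cylindrically symmetric, horizontally even and decreasing subsets of `S`. -/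
def inK (n : ℕ) (F : Set (V (n-1))) : Prop :=
  ∃ f : ℝ → ℝ≥0∞, (∀ x : ℝ, f (-x) = f x) ∧ AntitoneOn f (Icc 0 (1/2)) ∧
    F = {x : V (n-1) | x.1 ∈ Icc (-(1:ℝ)/2) (1/2) ∧ ENNReal.ofReal ‖x.2‖ ≤ f x.1}

/-- Euclidean ball in `ℝ × ℝ^{d}`. -/
def eball {d : ℕ} (c : V d) (r : ℝ) : Set (V d) := {x | eNorm (x - c) ≤ r}

/-- Fraenkel asymmetry. -/
def fDef {d : ℕ} (E : Set (V d)) : ℝ :=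
  sInf {t : ℝ | ∃ (c : V d) (r : ℝ), 0 < r ∧ volume (eball c r) = volume E ∧
    t = (volume (symmDiff E (eball c r))).toReal / (volume E).toReal}

/-!
Tile space by the translates `S + k e₁`. A point of `Fᶜ` in `S + k e₁` is either the translate
of a point of `S \ F`, or (only for `k ≠ 0`) a point of `(F + k e₁) \ F`. Summed over `k`, the
first kind reassembles the periodic kernel and gives exactly `P_S(F)`. The second kind is the
interaction of `F` with its translates `F + k e₁`: for `|k| ≥ 2` they are at horizontal distance
`≥ |k|/2`, which gives a summable multiple of `|F|²`; for `k = ±1` (equal by symmetry of the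
kernel) all pairs are at distance `≥ 1/4` except those counted by `Π_S(F)`.
-/

section Translation

variable {d : ℕ}

instance : (volume : Measure (V d)).IsAddRightInvariant := by
  rw [Measure.volume_eq_prod]
  infer_instance

lemma htrans_eq_image_add (τ : ℝ) (E : Set (V d)) :
    htrans τ E = (· + ((τ, 0) : V d)) '' E := by
  simp only [htrans]
  congr 1
  funext p
  ext <;> simp

lemma htrans_zero (E : Set (V d)) : htrans 0 E = E := by
  simp [htrans]

lemma volume_htrans (τ : ℝ) (E : Set (V d)) : volume (htrans τ E) = volume E := by
  rw [htrans_eq_image_add, image_add_right, measure_preimage_add_right]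

lemma setLIntegral_htrans (τ : ℝ) (E : Set (V d)) (f : V d → ℝ≥0∞) :
    ∫⁻ y in htrans τ E, f y = ∫⁻ z in E, f (z + (τ, 0)) := by
  rw [htrans_eq_image_add]
  exact ((measurePreserving_add_right volume _).setLIntegral_comp_emb
    (measurableEmbedding_addRight _) f E).symm

lemma iUnion_htrans_slab : ⋃ k : ℤ, htrans (k : ℝ) (slab d) = univ := by
  refine eq_univ_of_forall fun y => mem_iUnion.2 ⟨round y.1, (y.1 - round y.1, y.2), ?_, ?_⟩
  · have h := abs_sub_round y.1
    rw [abs_le] at h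
    simp only [slab, mem_ofPred_eq, mem_Icc]
    constructor <;> linarith
  · simp

lemma compl_inter_htrans_subset (τ : ℝ) (F T : Set (V d)) :
    Fᶜ ∩ htrans τ T ⊆ htrans τ (T \ F) ∪ (htrans τ F \ F) := by
  rintro _ ⟨hyF, p, hpT, rfl⟩
  by_cases hpF : p ∈ F
  · exact Or.inr ⟨mem_image_of_mem _ hpF, hyF⟩
  · exact Or.inl (mem_image_of_mem _ ⟨hpT, hpF⟩)

end Translation

lemma setLIntegral_setLIntegral_le_mul {α β : Type*} [MeasurableSpace α] [MeasurableSpace β]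
    {μ : Measure α} {ν : Measure β} {A : Set α} {B : Set β} {f : α → β → ℝ≥0∞} {c : ℝ≥0∞}
    (h : ∀ x ∈ A, ∀ y ∈ B, f x y ≤ c) :
    ∫⁻ x in A, ∫⁻ y in B, f x y ∂ν ∂μ ≤ c * ν B * μ A :=
  calc ∫⁻ x in A, ∫⁻ y in B, f x y ∂ν ∂μ ≤ ∫⁻ _ in A, c * ν B ∂μ :=
        setLIntegral_mono measurable_const fun x hx =>
          (setLIntegral_mono measurable_const (h x hx)).trans_eq (setLIntegral_const _ _)
    _ = c * ν B * μ A := setLIntegral_const _ _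

section Kernel

variable {d : ℕ} (n : ℕ) (s : ℝ)

lemma abs_fst_le_eNorm (x : V d) : |x.1| ≤ eNorm x := by
  rw [eNorm, ← Real.sqrt_sq_eq_abs]
  exact Real.sqrt_le_sqrt (le_add_of_nonneg_right (by positivity))

lemma ker_neg (x : V d) : ker n s (-x) = ker n s x := by
  simp [ker, eNorm]

lemma measurable_ker : Measurable (ker n s : V d → ℝ≥0∞) := by
  unfold ker eNorm
  fun_prop

@[fun_prop]
lemma measurable_setLIntegral_ker (T : Set (V d)) :
    Measurable fun x : V d => ∫⁻ y in T, ker n s (x - y) :=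
  ((measurable_ker n s).comp (measurable_fst.sub measurable_snd)).lintegral_prod_right'

lemma Kper_sub_eq_tsum (x z : V d) :
    Kper n s (x - z) = ∑' k : ℤ, ker n s (x - (z + ((k : ℝ), 0))) := by
  rw [Kper, ← (Equiv.neg ℤ).tsum_eq]
  refine tsum_congr fun k => congr_arg (ker n s) ?_
  ext
  · simp only [Equiv.neg_apply, Int.cast_neg, Prod.fst_sub, Prod.fst_add]
    ring
  · simp

end Kernel

lemma ker_le_of_le_abs_fst {d n : ℕ} {s : ℝ} (hns : 0 ≤ (n : ℝ) + s) {x : V d} {r : ℝ}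
    (hr : 0 < r) (h : r ≤ |x.1|) : ker n s x ≤ ENNReal.ofReal (r ^ (-((n : ℝ) + s))) := by
  have hrx : r ≤ eNorm x := h.trans (abs_fst_le_eNorm x)
  rw [ker, ENNReal.ofReal_rpow_of_pos (hr.trans_le hrx)]
  exact ENNReal.ofReal_le_ofReal (Real.rpow_le_rpow_of_nonpos hr hrx (neg_nonpos.2 hns))

section Periodization

variable {d : ℕ} (n : ℕ) (s : ℝ)

lemma tsum_setLIntegral_htrans_ker (A B : Set (V d)) :
    ∑' k : ℤ, ∫⁻ x in A, ∫⁻ y in htrans (k : ℝ) B, ker n s (x - y)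
      = ∫⁻ x in A, ∫⁻ y in B, Kper n s (x - y) := by
  rw [← lintegral_tsum fun k => (measurable_setLIntegral_ker n s _).aemeasurable]
  refine lintegral_congr fun x => ?_
  simp_rw [setLIntegral_htrans, Kper_sub_eq_tsum]
  exact (lintegral_tsum fun k => ((measurable_ker n s).comp (by fun_prop)).aemeasurable).symm

lemma Pers_le_tsum_add_tsum (F : Set (V d)) :
    Pers n s F ≤ (∑' k : ℤ, ∫⁻ x in F, ∫⁻ y in htrans (k : ℝ) (slab d \ F), ker n s (x - y))
      + ∑' k : ℤ, ∫⁻ x in F, ∫⁻ y in htrans (k : ℝ) F \ F, ker n s (x - y) := by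
  have hcover : ∀ x : V d, ∫⁻ y in Fᶜ, ker n s (x - y) ≤
      ∑' k : ℤ, ((∫⁻ y in htrans (k : ℝ) (slab d \ F), ker n s (x - y))
        + ∫⁻ y in htrans (k : ℝ) F \ F, ker n s (x - y)) := fun x =>
    calc ∫⁻ y in Fᶜ, ker n s (x - y)
        = ∫⁻ y in ⋃ k : ℤ, Fᶜ ∩ htrans (k : ℝ) (slab d), ker n s (x - y) := by
          rw [← inter_iUnion, iUnion_htrans_slab, inter_univ]
      _ ≤ ∑' k : ℤ, ∫⁻ y in Fᶜ ∩ htrans (k : ℝ) (slab d), ker n s (x - y) :=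
          lintegral_iUnion_le _ _
      _ ≤ _ := ENNReal.tsum_le_tsum fun k =>
          (lintegral_mono_set (compl_inter_htrans_subset _ F _)).trans (lintegral_union_le _ _ _)
  calc Pers n s F ≤ ∫⁻ x in F, ∑' k : ℤ, ((∫⁻ y in htrans (k : ℝ) (slab d \ F), ker n s (x - y))
        + ∫⁻ y in htrans (k : ℝ) F \ F, ker n s (x - y)) := lintegral_mono hcover
    _ = _ := by
      rw [lintegral_tsum fun k => by fun_prop, ← ENNReal.tsum_add]
      exact tsum_congr fun k => lintegral_add_left (measurable_setLIntegral_ker n s _) _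

lemma tsum_setLIntegral_htrans_slab_diff_eq_PS {F : Set (V d)} (hF : F ⊆ slab d) :
    ∑' k : ℤ, ∫⁻ x in F, ∫⁻ y in htrans (k : ℝ) (slab d \ F), ker n s (x - y) = PS n s F := by
  rw [tsum_setLIntegral_htrans_ker, PS, inter_eq_self_of_subset_left hF]

end Periodization

section CrossTerms

variable {d n : ℕ} {s : ℝ}

lemma setLIntegral_htrans_neg_ker_comm (τ : ℝ) (A B : Set (V d)) :
    ∫⁻ x in A, ∫⁻ y in htrans (-τ) B, ker n s (x - y)
      = ∫⁻ z in B, ∫⁻ y in htrans τ A, ker n s (z - y) := by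
  simp_rw [setLIntegral_htrans]
  have hm : Measurable fun p : V d × V d => ker n s (p.1 - (p.2 + (-τ, 0))) :=
    (measurable_ker n s).comp (by fun_prop)
  rw [lintegral_lintegral_swap hm.aemeasurable]
  refine lintegral_congr fun z => lintegral_congr fun x => ?_
  rw [← ker_neg]
  congr 1
  ext
  · simp only [Prod.fst_neg, Prod.fst_sub, Prod.fst_add]
    ring
  · simp

lemma setLIntegral_htrans_ker_le_of_two_le_abs (hns : 0 ≤ (n : ℝ) + s) {F : Set (V d)}
    (hF : F ⊆ slab d) {τ : ℝ} (hτ : 2 ≤ |τ|) :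
    ∫⁻ x in F, ∫⁻ y in htrans τ F, ker n s (x - y)
      ≤ ENNReal.ofReal ((|τ| / 2) ^ (-((n : ℝ) + s))) * volume F * volume F := by
  refine (setLIntegral_setLIntegral_le_mul ?_).trans_eq (by rw [volume_htrans])
  rintro x hx _ ⟨w, hw, rfl⟩
  refine ker_le_of_le_abs_fst hns (by positivity) ?_
  have hxS : x ∈ slab d := hF hx
  have hwS : w ∈ slab d := hF hw
  have hxw : |x.1 - w.1| ≤ 1 := abs_le.2 ⟨by linarith [hxS.1, hwS.2], by linarith [hxS.2, hwS.1]⟩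
  calc |τ| / 2 ≤ |τ| - |x.1 - w.1| := by linarith
    _ ≤ |τ - (x.1 - w.1)| := abs_sub_abs_le_abs_sub _ _
    _ = |(x - _).1| := by rw [abs_sub_comm]; simp only [Prod.fst_sub]; ring_nf

lemma setLIntegral_htrans_one_ker_le (hns : 0 ≤ (n : ℝ) + s) {F : Set (V d)}
    (hF : F ⊆ slab d) :
    ∫⁻ x in F, ∫⁻ y in htrans 1 F, ker n s (x - y)
      ≤ PiS n s F
        + 2 * (ENNReal.ofReal ((1 / 4 : ℝ) ^ (-((n : ℝ) + s))) * volume F * volume F) := by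
  set M := ENNReal.ofReal ((1 / 4 : ℝ) ^ (-((n : ℝ) + s)))
  set A : Set (V d) := {x | x.1 ∈ Icc (1 / 4 : ℝ) (1 / 2)}
  set B : Set (V d) := {y | y.1 ∈ Icc (1 / 2 : ℝ) (3 / 4)}
  have hA : MeasurableSet A := measurable_fst measurableSet_Icc
  have hB : MeasurableSet B := measurable_fst measurableSet_Icc
  have hker : ∀ x y : V d, 1 / 4 ≤ |(x - y).1| → ker n s (x - y) ≤ M :=
    fun x y => ker_le_of_le_abs_fst hns (by norm_num)
  have hfar : ∫⁻ x in F, ∫⁻ y in htrans 1 F \ B, ker n s (x - y) ≤ M * volume F * volume F := by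
    refine (setLIntegral_setLIntegral_le_mul (c := M) ?_).trans ?_
    · rintro x hx _ ⟨⟨w, hw, rfl⟩, hwB⟩
      have hxS : x ∈ slab d := hF hx
      have hwS : w ∈ slab d := hF hw
      have hw1 : 3 / 4 < w.1 + 1 := by
        by_contra! h
        exact hwB ⟨by linarith [hwS.1], h⟩
      exact hker _ _ (le_abs.2 (Or.inr (by simp only [Prod.fst_sub]; linarith [hxS.2])))
    · gcongr M * ?_ * _
      exact (measure_mono sdiff_subset).trans_eq (volume_htrans 1 F)
  have hmid : ∫⁻ x in F \ A, ∫⁻ y in htrans 1 F ∩ B, ker n s (x - y) ≤ M * volume F * volume F := by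
    refine (setLIntegral_setLIntegral_le_mul (c := M) ?_).trans ?_
    · rintro x ⟨hx, hxA⟩ y ⟨-, hyB⟩
      have hxS : x ∈ slab d := hF hx
      have hx1 : x.1 < 1 / 4 := by
        by_contra! h
        exact hxA ⟨h, hxS.2⟩
      exact hker _ _ (le_abs.2 (Or.inr (by simp only [Prod.fst_sub]; linarith [hyB.1])))
    · gcongr M * ?_ * ?_
      · exact (measure_mono inter_subset_left).trans_eq (volume_htrans 1 F)
      · exact measure_mono sdiff_subset
  calc ∫⁻ x in F, ∫⁻ y in htrans 1 F, ker n s (x - y)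
      = (∫⁻ x in F, ∫⁻ y in htrans 1 F ∩ B, ker n s (x - y))
        + ∫⁻ x in F, ∫⁻ y in htrans 1 F \ B, ker n s (x - y) := by
        rw [← lintegral_add_left (measurable_setLIntegral_ker n s _)]
        exact lintegral_congr fun x => (lintegral_inter_add_sdiff _ _ hB).symm
    _ = (∫⁻ x in F ∩ A, ∫⁻ y in htrans 1 F ∩ B, ker n s (x - y))
        + (∫⁻ x in F \ A, ∫⁻ y in htrans 1 F ∩ B, ker n s (x - y))
        + ∫⁻ x in F, ∫⁻ y in htrans 1 F \ B, ker n s (x - y) := by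
        rw [lintegral_inter_add_sdiff _ _ hA]
    _ ≤ PiS n s F + M * volume F * volume F + M * volume F * volume F :=
        add_le_add (add_le_add le_rfl hmid) hfar
    _ = PiS n s F + 2 * (M * volume F * volume F) := by ring

lemma tsum_setLIntegral_htrans_diff_ker_le (hns : 0 ≤ (n : ℝ) + s) {F : Set (V d)}
    (hF : F ⊆ slab d) :
    ∑' k : ℤ, ∫⁻ x in F, ∫⁻ y in htrans (k : ℝ) F \ F, ker n s (x - y)
      ≤ 2 * (PiS n s F
          + 2 * (ENNReal.ofReal ((1 / 4 : ℝ) ^ (-((n : ℝ) + s))) * volume F * volume F))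
        + (∑' k : ℤ, ENNReal.ofReal ((|(k : ℝ)| / 2) ^ (-((n : ℝ) + s))))
          * volume F * volume F := by
  set G := ∫⁻ x in F, ∫⁻ y in htrans 1 F, ker n s (x - y)
  have hG := setLIntegral_htrans_one_ker_le hns hF
  have hterm : ∀ k : ℤ, ∫⁻ x in F, ∫⁻ y in htrans (k : ℝ) F \ F, ker n s (x - y)
      ≤ (if k = 1 then G else 0) + (if k = -1 then G else 0)
        + ENNReal.ofReal ((|(k : ℝ)| / 2) ^ (-((n : ℝ) + s))) * volume F * volume F := by
    intro k
    have hdrop : ∫⁻ x in F, ∫⁻ y in htrans (k : ℝ) F \ F, ker n s (x - y)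
        ≤ ∫⁻ x in F, ∫⁻ y in htrans (k : ℝ) F, ker n s (x - y) :=
      lintegral_mono fun x => lintegral_mono_set sdiff_subset
    rcases eq_or_ne k 0 with rfl | hk0
    · simp [htrans_zero]
    rcases eq_or_ne k 1 with rfl | hk1
    · rw [if_pos rfl]
      exact le_add_right (le_add_right (by exact_mod_cast hdrop))
    rcases eq_or_ne k (-1) with rfl | hkm1
    · refine le_add_right (le_add_left ?_)
      rw [if_pos rfl]
      push_cast at hdrop ⊢
      exact hdrop.trans_eq (setLIntegral_htrans_neg_ker_comm 1 F F)
    have hk : (2 : ℝ) ≤ |(k : ℝ)| := by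
      rw [← Int.cast_abs, show (2 : ℝ) = ((2 : ℤ) : ℝ) by norm_num, Int.cast_le, le_abs]
      omega
    simpa [hk1, hkm1] using hdrop.trans (setLIntegral_htrans_ker_le_of_two_le_abs hns hF hk)
  refine (ENNReal.tsum_le_tsum hterm).trans ?_
  rw [ENNReal.tsum_add, ENNReal.tsum_add, tsum_ite_eq, tsum_ite_eq, ENNReal.tsum_mul_right,
    ENNReal.tsum_mul_right, two_mul]
  gcongr

end CrossTerms

lemma tsum_ofReal_abs_div_two_rpow_ne_top {p : ℝ} (hp : 1 < p) :
    ∑' k : ℤ, ENNReal.ofReal ((|(k : ℝ)| / 2) ^ (-p)) ≠ ⊤ := by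
  have hsum : Summable fun k : ℤ => (|(k : ℝ)| / 2) ^ (-p) := by
    simp only [Real.div_rpow (abs_nonneg _) zero_le_two]
    exact (Real.summable_abs_int_rpow hp).div_const _
  rw [← ENNReal.ofReal_tsum_of_nonneg (fun k => by positivity) hsum]
  exact ENNReal.ofReal_ne_top

theorem Pers_le_PS_plus (n : ℕ) (hn : 2 ≤ n) (s : ℝ) (hs : s ∈ Set.Ioo (0:ℝ) 1) :
    ∃ C > (0:ℝ), ∀ F : Set (V (n-1)), F ⊆ slab (n-1) → volume F < ⊤ →
      Pers n s F ≤ PS n s F + ENNReal.ofReal C * ((volume F) ^ 2 + PiS n s F) := by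
  have hns : 1 < (n : ℝ) + s := by
    have : (2 : ℝ) ≤ n := by exact_mod_cast hn
    linarith [hs.1]
  set M := ENNReal.ofReal ((1 / 4 : ℝ) ^ (-((n : ℝ) + s)))
  set Ξ := ∑' k : ℤ, ENNReal.ofReal ((|(k : ℝ)| / 2) ^ (-((n : ℝ) + s)))
  have hc : 2 + 4 * M + Ξ ≠ ⊤ := by
    have := tsum_ofReal_abs_div_two_rpow_ne_top hns
    finiteness
  refine ⟨(2 + 4 * M + Ξ).toReal, ENNReal.toReal_pos (by simp) hc, fun F hF _ => ?_⟩
  rw [ENNReal.ofReal_toReal hc]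
  calc Pers n s F
      ≤ PS n s F + ∑' k : ℤ, ∫⁻ x in F, ∫⁻ y in htrans (k : ℝ) F \ F, ker n s (x - y) := by
        rw [← tsum_setLIntegral_htrans_slab_diff_eq_PS n s hF]
        exact Pers_le_tsum_add_tsum n s F
    _ ≤ PS n s F + (2 * (PiS n s F + 2 * (M * volume F * volume F)) + Ξ * volume F * volume F) := by
        gcongr
        exact tsum_setLIntegral_htrans_diff_ker_le (by linarith) hF
    _ = PS n s F + (2 * PiS n s F + (4 * M + Ξ) * volume F ^ 2) := by ring
    _ ≤ PS n s F + (2 + 4 * M + Ξ) * (volume F ^ 2 + PiS n s F) := by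
        rw [mul_add, add_comm (_ * volume F ^ 2)]
        gcongr
        exacts [le_self_add.trans le_self_add, le_add_self]
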